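/- For every element g of the first Grigorchuk group G and every integer n ≥ ⌈log₂ |g|_S⌉ + 1, all states g_v with v ∈ X_n lie in the nucleus N = {1, a, b, c, d}. -/

import Mathlib

noncomputable section

/-! ### The Grigorchuk generators -/

namespace Grig

def aFun : List Bool → List Bool
  | [] => []
  | x :: w => (!x) :: w

mutual
  def bFun : List Bool → List Bool
    | [] => []
    | false :: w => false :: aFun w
    | true :: w => true :: cFun w
  def cFun : List Bool → List Bool
    | [] => []
    | false :: w => false :: aFun w
    | true :: w => true :: dFun w
  def dFun : List Bool → List Bool
    | [] => []
    | false :: w => false :: w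
    | true :: w => true :: bFun w
end

theorem aFun_involutive : Function.Involutive aFun := by
  intro w
  match w with
  | [] => rfl
  | x :: w => simp [aFun]

theorem bcd_involutive :
    ∀ w : List Bool, bFun (bFun w) = w ∧ cFun (cFun w) = w ∧ dFun (dFun w) = w := by
  intro w
  induction w with
  | nil => exact ⟨rfl, rfl, rfl⟩
  | cons x w ih =>
    rcases x with _ | _
    · simp [bFun, cFun, dFun, aFun_involutive w]
    · simp [bFun, cFun, dFun, ih.1, ih.2.1, ih.2.2]

theorem bFun_involutive : Function.Involutive bFun := fun w => (bcd_involutive w).1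
theorem cFun_involutive : Function.Involutive cFun := fun w => (bcd_involutive w).2.1
theorem dFun_involutive : Function.Involutive dFun := fun w => (bcd_involutive w).2.2

theorem aFun_length : ∀ w : List Bool, (aFun w).length = w.length := by
  intro w
  match w with
  | [] => rfl
  | x :: w => simp [aFun]

theorem bcd_length : ∀ w : List Bool,
    (bFun w).length = w.length ∧ (cFun w).length = w.length ∧ (dFun w).length = w.length := by
  intro w
  induction w with
  | nil => exact ⟨rfl, rfl, rfl⟩
  | cons x w ih =>
    rcases x with _ | _
    · simp [bFun, cFun, dFun, aFun_length w]
    · simp [bFun, cFun, dFun, ih.1, ih.2.1, ih.2.2]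

theorem bFun_length : ∀ w, (bFun w).length = w.length := fun w => (bcd_length w).1
theorem cFun_length : ∀ w, (cFun w).length = w.length := fun w => (bcd_length w).2.1
theorem dFun_length : ∀ w, (dFun w).length = w.length := fun w => (bcd_length w).2.2

/-- The generators of the first Grigorchuk group as permutations of the vertex set
`{0,1}*` of the rooted binary tree. -/
def aPerm : Equiv.Perm (List Bool) := aFun_involutive.toPerm
def bPerm : Equiv.Perm (List Bool) := bFun_involutive.toPerm
def cPerm : Equiv.Perm (List Bool) := cFun_involutive.toPerm
def dPerm : Equiv.Perm (List Bool) := dFun_involutive.toPerm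

/-- The generating set `S = {a, b, c, d}` (a set of involutions). -/
def Sset : Set (Equiv.Perm (List Bool)) := {aPerm, bPerm, cPerm, dPerm}

/-- The first Grigorchuk group. -/
def Grigorchuk : Subgroup (Equiv.Perm (List Bool)) := Subgroup.closure Sset

/-- Word length with respect to `S = {a, b, c, d}`. -/
def wordLength (g : Equiv.Perm (List Bool)) : ℕ :=
  sInf {k | ∃ l : List (Equiv.Perm (List Bool)),
    (∀ x ∈ l, x ∈ Sset) ∧ l.length = k ∧ l.prod = g}

/-- The growth function of the first Grigorchuk group with respect to `S`. -/
def growthGrig (m : ℕ) : ℕ :=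
  Nat.card {g : Equiv.Perm (List Bool) |
    ∃ l : List (Equiv.Perm (List Bool)), (∀ x ∈ l, x ∈ Sset) ∧ l.length ≤ m ∧ l.prod = g}

/-! ### Level transfer -/

def levelFun (n : ℕ) (f : List Bool → List Bool) (v : Fin n → Bool) : Fin n → Bool :=
  fun i => (f (List.ofFn v)).getD i false

theorem levelFun_involutive (n : ℕ) (f : List Bool → List Bool)
    (hlen : ∀ l, (f l).length = l.length) (hinv : Function.Involutive f) :
    Function.Involutive (levelFun n f) := by
  intro v
  have key : ∀ u : Fin n → Bool, List.ofFn (levelFun n f u) = f (List.ofFn u) := by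
    intro u
    apply List.ext_getElem
    · simp [hlen]
    · intro i h1 h2
      simp only [List.getElem_ofFn]
      simp [levelFun, List.getD_eq_getElem, h2]
  funext i
  simp only [levelFun, key v, hinv (List.ofFn v)]
  simp [List.getD_eq_getElem]

/-- The images `a_n, b_n, c_n, d_n` of the Grigorchuk generators in `Sym(X_n)`,
where the `n`-th level `X_n = {0,1}^n` is identified with `Fin n → Bool`. -/
def aLev (n : ℕ) : Equiv.Perm (Fin n → Bool) :=
  (levelFun_involutive n aFun aFun_length aFun_involutive).toPerm
def bLev (n : ℕ) : Equiv.Perm (Fin n → Bool) :=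
  (levelFun_involutive n bFun bFun_length bFun_involutive).toPerm
def cLev (n : ℕ) : Equiv.Perm (Fin n → Bool) :=
  (levelFun_involutive n cFun cFun_length cFun_involutive).toPerm
def dLev (n : ℕ) : Equiv.Perm (Fin n → Bool) :=
  (levelFun_involutive n dFun dFun_length dFun_involutive).toPerm

end Grig

/-! A word in `a, b, c, d` can be shortened, without changing its value, until `a` alternates with
letters of `{b, c, d}`: `a² = 1` and `{1, b, c, d}` is a Klein four-group. At most half (rounded
up) of the letters of an alternating word differ from `a`, and in the first-level states each of
`b, c, d` leaves one letter and `a` none. So the first-level states of a word of length at most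
`2 ^ (k + 1)` are words of length at most `2 ^ k`, and after `n ≥ log₂ |g|_S` levels the states of
`g` have length at most `1`, i.e. lie in `{1, a, b, c, d}`. -/

namespace Grig

open Equiv

inductive Letter | a | b | c | d
  deriving DecidableEq

namespace Letter

def toPerm : Letter → Perm (List Bool)
  | a => aPerm | b => bPerm | c => cPerm | d => dPerm

def swapsRoot : Letter → Bool
  | a => true
  | _ => false

/-- The first-level states of a generator, as words: `b = (a, c)`, `c = (a, d)`, `d = (1, b)`. -/
def state : Letter → Bool → List Letter
  | a, _ => []
  | b, false => [a]
  | b, true => [c]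
  | c, false => [a]
  | c, true => [d]
  | d, false => []
  | d, true => [b]

theorem range_toPerm : Set.range toPerm = Sset := by
  ext p
  constructor
  · rintro ⟨s, rfl⟩
    cases s <;> simp [toPerm, Sset]
  · rintro (rfl | rfl | rfl | rfl)
    exacts [⟨a, rfl⟩, ⟨b, rfl⟩, ⟨c, rfl⟩, ⟨d, rfl⟩]

end Letter

theorem aPerm_mul_self : aPerm * aPerm = 1 := Equiv.ext aFun_involutive
theorem bPerm_mul_self : bPerm * bPerm = 1 := Equiv.ext bFun_involutive
theorem cPerm_mul_self : cPerm * cPerm = 1 := Equiv.ext cFun_involutive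
theorem dPerm_mul_self : dPerm * dPerm = 1 := Equiv.ext dFun_involutive

theorem bcd_comp : ∀ w : List Bool,
    bFun (cFun w) = dFun w ∧ cFun (dFun w) = bFun w ∧ dFun (bFun w) = cFun w ∧
      cFun (bFun w) = dFun w ∧ dFun (cFun w) = bFun w ∧ bFun (dFun w) = cFun w
  | [] => ⟨rfl, rfl, rfl, rfl, rfl, rfl⟩
  | false :: w => by simp [bFun, cFun, dFun, aFun_involutive w]
  | true :: w => by
    obtain ⟨hbc, hcd, hdb, hcb, hdc, hbd⟩ := bcd_comp w
    simp [bFun, cFun, dFun, hbc, hcd, hdb, hcb, hdc, hbd]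

theorem bPerm_mul_cPerm : bPerm * cPerm = dPerm := Equiv.ext fun w => (bcd_comp w).1
theorem cPerm_mul_dPerm : cPerm * dPerm = bPerm := Equiv.ext fun w => (bcd_comp w).2.1
theorem dPerm_mul_bPerm : dPerm * bPerm = cPerm := Equiv.ext fun w => (bcd_comp w).2.2.1
theorem cPerm_mul_bPerm : cPerm * bPerm = dPerm := Equiv.ext fun w => (bcd_comp w).2.2.2.1
theorem dPerm_mul_cPerm : dPerm * cPerm = bPerm := Equiv.ext fun w => (bcd_comp w).2.2.2.2.1
theorem bPerm_mul_dPerm : bPerm * dPerm = cPerm := Equiv.ext fun w => (bcd_comp w).2.2.2.2.2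

def evalWord (l : List Letter) : Perm (List Bool) := (l.map Letter.toPerm).prod

@[simp] theorem evalWord_nil : evalWord [] = 1 := rfl

@[simp] theorem evalWord_cons (s : Letter) (l : List Letter) :
    evalWord (s :: l) = s.toPerm * evalWord l := List.prod_cons

@[simp] theorem evalWord_append (l l' : List Letter) :
    evalWord (l ++ l') = evalWord l * evalWord l' := by
  simp [evalWord]

def reduceCons : Letter → List Letter → List Letter
  | s, [] => [s]
  | .a, .a :: l => l
  | .b, .b :: l => l
  | .c, .c :: l => l
  | .d, .d :: l => l
  | .b, .c :: l => .d :: l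
  | .c, .b :: l => .d :: l
  | .c, .d :: l => .b :: l
  | .d, .c :: l => .b :: l
  | .d, .b :: l => .c :: l
  | .b, .d :: l => .c :: l
  | s, t :: l => s :: t :: l

def reduce : List Letter → List Letter := List.foldr reduceCons []

def IsAlternating (l : List Letter) : Prop := l.IsChain fun s t => s = .a ↔ t ≠ .a

theorem evalWord_reduceCons (s : Letter) (l : List Letter) :
    evalWord (reduceCons s l) = s.toPerm * evalWord l := by
  match l with
  | [] => simp [reduceCons]
  | t :: l =>
    cases s <;> cases t <;>
      simp [reduceCons, Letter.toPerm, ← mul_assoc, aPerm_mul_self, bPerm_mul_self,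
        cPerm_mul_self, dPerm_mul_self, bPerm_mul_cPerm, cPerm_mul_dPerm, dPerm_mul_bPerm,
        cPerm_mul_bPerm, dPerm_mul_cPerm, bPerm_mul_dPerm]


theorem length_reduceCons_le (s : Letter) (l : List Letter) :
    (reduceCons s l).length ≤ l.length + 1 := by
  match l with
  | [] => simp [reduceCons]
  | t :: l => cases s <;> cases t <;> simp [reduceCons] <;> omega

theorem IsAlternating.reduceCons (s : Letter) {l : List Letter} (h : IsAlternating l) :
    IsAlternating (reduceCons s l) := by
  match l with
  | [] => cases s <;> simp [Grig.reduceCons, IsAlternating]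
  | [t] => cases s <;> cases t <;> simp [Grig.reduceCons, IsAlternating]
  | t :: x :: l =>
    rw [IsAlternating, List.isChain_cons_cons] at h
    obtain ⟨htx, hxl⟩ := h
    cases s <;> cases t <;> cases x <;>
      simp_all [Grig.reduceCons, IsAlternating, List.isChain_cons_cons]

theorem evalWord_reduce (l : List Letter) : evalWord (reduce l) = evalWord l := by
  induction l with
  | nil => rfl
  | cons s l ih => rw [reduce, List.foldr_cons, evalWord_reduceCons, ← reduce, ih, evalWord_cons]

theorem length_reduce_le (l : List Letter) : (reduce l).length ≤ l.length := by
  induction l with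
  | nil => rfl
  | cons s l ih => exact (length_reduceCons_le s (reduce l)).trans (Nat.succ_le_succ ih)

theorem isAlternating_reduce (l : List Letter) : IsAlternating (reduce l) := by
  induction l with
  | nil => exact List.isChain_nil
  | cons s l ih => exact ih.reduceCons s

theorem IsAlternating.two_mul_countP_le :
    ∀ {l : List Letter}, IsAlternating l → 2 * l.countP (· ≠ .a) ≤ l.length + 1
  | [], _ => by simp
  | [s], _ => by cases s <;> simp
  | s :: t :: l, h => by
    rw [IsAlternating, List.isChain_cons_cons] at h
    have ih := IsAlternating.two_mul_countP_le h.2.tail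
    cases s <;> cases t <;> simp_all <;> omega

def swapsRoot : List Letter → Bool
  | [] => false
  | s :: l => xor s.swapsRoot (swapsRoot l)

-- `evalWord (s :: l)` applies `l` first, so `s` acts at the vertex to which `l` moves `x`.
def stateWord : List Letter → Bool → List Letter
  | [], _ => []
  | s :: l, x => s.state (xor x (swapsRoot l)) ++ stateWord l x

theorem Letter.toPerm_cons_apply (s : Letter) (x : Bool) (w : List Bool) :
    s.toPerm (x :: w) = xor x s.swapsRoot :: evalWord (s.state x) w := by
  cases s <;> cases x <;> rfl

theorem evalWord_cons_apply (l : List Letter) (x : Bool) (w : List Bool) :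
    evalWord l (x :: w) = xor x (swapsRoot l) :: evalWord (stateWord l x) w := by
  induction l with
  | nil => simp [swapsRoot, stateWord]
  | cons s l ih =>
    simp [Perm.mul_apply, ih, Letter.toPerm_cons_apply, stateWord, swapsRoot, Bool.xor_comm]

theorem length_stateWord_le (l : List Letter) (x : Bool) :
    (stateWord l x).length ≤ l.countP (· ≠ .a) := by
  induction l with
  | nil => rfl
  | cons s l ih =>
    have : (s.state (xor x (swapsRoot l))).length ≤ if s ≠ .a then 1 else 0 := by
      cases s <;> cases xor x (swapsRoot l) <;> simp [Letter.state]
    simp only [stateWord, List.length_append, List.countP_cons, decide_eq_true_eq]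
    omega

theorem two_mul_length_stateWord_reduce_le (l : List Letter) (x : Bool) :
    2 * (stateWord (reduce l) x).length ≤ l.length + 1 :=
  calc 2 * (stateWord (reduce l) x).length
      ≤ 2 * (reduce l).countP (· ≠ .a) := Nat.mul_le_mul_left 2 (length_stateWord_le _ x)
    _ ≤ (reduce l).length + 1 := (isAlternating_reduce l).two_mul_countP_le
    _ ≤ l.length + 1 := Nat.succ_le_succ (length_reduce_le l)

def nucleus : Set (Perm (List Bool)) := {1, aPerm, bPerm, cPerm, dPerm}

theorem evalWord_mem_nucleus_of_length_le_one :
    ∀ {l : List Letter}, l.length ≤ 1 → evalWord l ∈ nucleus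
  | [], _ => Or.inl rfl
  | [s], _ => by cases s <;> simp [nucleus, Letter.toPerm]

theorem evalWord_apply_nil (l : List Letter) : evalWord l [] = [] := by
  induction l with
  | nil => rfl
  | cons s l ih => cases s <;> simp [Perm.mul_apply, ih] <;> rfl

theorem exists_mem_nucleus_of_length_le_two_pow :
    ∀ (v : List Bool) {l : List Letter}, l.length ≤ 2 ^ v.length →
      ∃ h ∈ nucleus, ∀ w, evalWord l (v ++ w) = evalWord l v ++ h w
  | [], l, hl =>
    ⟨evalWord l, evalWord_mem_nucleus_of_length_le_one hl, fun w => by simp [evalWord_apply_nil]⟩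
  | x :: v, l, hl => by
    have hstate : (stateWord (reduce l) x).length ≤ 2 ^ v.length := by
      have := two_mul_length_stateWord_reduce_le l x
      rw [List.length_cons, pow_succ] at hl
      omega
    obtain ⟨h, hh, hv⟩ := exists_mem_nucleus_of_length_le_two_pow v hstate
    refine ⟨h, hh, fun w => ?_⟩
    rw [← evalWord_reduce l, List.cons_append, evalWord_cons_apply, evalWord_cons_apply, hv,
      List.cons_append]

theorem exists_evalWord_eq_of_mem {g : Perm (List Bool)} (hg : g ∈ Grigorchuk) :
    ∃ l : List Letter, evalWord l = g ∧ l.length = wordLength g := by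
  have hfin : ∀ x ∈ Sset, IsOfFinOrder x := by
    rintro x (rfl | rfl | rfl | rfl) <;> refine isOfFinOrder_iff_pow_eq_one.2 ⟨2, two_pos, ?_⟩
    exacts [aPerm_mul_self, bPerm_mul_self, cPerm_mul_self, dPerm_mul_self]
  obtain ⟨l, hl, hprod⟩ := Submonoid.exists_list_of_mem_closure
    (Subgroup.closure_toSubmonoid_of_isOfFinOrder hfin ▸ hg : g ∈ Submonoid.closure Sset)
  obtain ⟨l', hl', hlen, hprod'⟩ : wordLength g ∈ {k | ∃ l : List (Perm (List Bool)),
      (∀ x ∈ l, x ∈ Sset) ∧ l.length = k ∧ l.prod = g} := Nat.sInf_mem ⟨l.length, l, hl, rfl, hprod⟩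
  obtain ⟨m, rfl⟩ : l' ∈ Set.range (List.map Letter.toPerm) := by
    rwa [Set.range_list_map, Letter.range_toPerm]
  exact ⟨m, hprod', by rwa [List.length_map] at hlen⟩

end Grig

/-- **The contracting property of the first Grigorchuk group:** for every `g ∈ 𝒢` and
every `n ≥ ⌈log₂ |g|_S⌉ + 1`, all states `g_v` with `v ∈ X_n` lie in the nucleus
`N = {1, a, b, c, d}`.  Here the state of `g` at `v` is the unique automorphism `h`
with `g(vw) = g(v) h(w)` for all words `w`. -/
theorem grigorchuk_nucleus_states (g : Equiv.Perm (List Bool)) (hg : g ∈ Grig.Grigorchuk)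
    (n : ℕ) (hn : Nat.clog 2 (Grig.wordLength g) + 1 ≤ n)
    (v : List Bool) (hv : v.length = n) :
    ∃ h ∈ ({1, Grig.aPerm, Grig.bPerm, Grig.cPerm, Grig.dPerm} :
        Set (Equiv.Perm (List Bool))),
      ∀ w : List Bool, g (v ++ w) = g v ++ h w := by
  obtain ⟨l, rfl, hl⟩ := Grig.exists_evalWord_eq_of_mem hg
  have hlv : l.length ≤ 2 ^ v.length :=
    calc l.length = Grig.wordLength (Grig.evalWord l) := hl
      _ ≤ 2 ^ Nat.clog 2 (Grig.wordLength (Grig.evalWord l)) := Nat.le_pow_clog one_lt_two _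
      _ ≤ 2 ^ v.length := Nat.pow_le_pow_right two_pos (by omega)
  exact Grig.exists_mem_nucleus_of_length_le_two_pow v hlv

end
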